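/- arXiv:0812.1712 — 2 statements merged into one kernel-verified Lean document; each statement's English description precedes it below -/
import Mathlib

section
/- Let Φ : ℝ → ℝ be twice continuously differentiable and let W ∈ L^∞(ℝ) satisfy W(φ) = (𝒜Φ′(𝒜W))(φ) for almost every φ ∈ ℝ. Then W agrees almost everywhere with a twice continuously differentiable function. -/
open MeasureTheory Filter Topology

/-- The averaging operator `(𝒜U)(φ) = ∫_{φ-1/2}..(φ+1/2), U(s) ds`. -/
noncomputable def avg (U : ℝ → ℝ) (φ : ℝ) : ℝ := ∫ s in (φ - 1/2)..(φ + 1/2), U s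

lemma avg_eq_sub {U : ℝ → ℝ} (hU : ∀ a b : ℝ, IntervalIntegrable U volume a b) (φ : ℝ) :
    avg U φ = (∫ t in (0:ℝ)..(φ + 1/2), U t) - ∫ t in (0:ℝ)..(φ - 1/2), U t := by
  rw [avg, intervalIntegral.integral_interval_sub_left (hU _ _) (hU _ _)]

lemma continuous_avg {U : ℝ → ℝ} (hU : ∀ a b : ℝ, IntervalIntegrable U volume a b) :
    Continuous (avg U) := by
  have hG : Continuous (fun x => ∫ t in (0:ℝ)..x, U t) :=
    intervalIntegral.continuous_primitive hU 0
  have : Continuous (fun φ : ℝ =>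
      (∫ t in (0:ℝ)..(φ + 1/2), U t) - ∫ t in (0:ℝ)..(φ - 1/2), U t) :=
    (hG.comp (continuous_id.add continuous_const)).sub
      (hG.comp (continuous_id.sub continuous_const))
  exact this.congr fun φ => (avg_eq_sub hU φ).symm

lemma avg_hasDerivAt {f : ℝ → ℝ} (hf : Continuous f) (φ : ℝ) :
    HasDerivAt (avg f) (f (φ + 1/2) - f (φ - 1/2)) φ := by
  have hint : ∀ a b : ℝ, IntervalIntegrable f volume a b := fun a b =>
    hf.intervalIntegrable a b
  have hG : ∀ x : ℝ, HasDerivAt (fun u => ∫ t in (0:ℝ)..u, f t) (f x) x := fun x =>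
    intervalIntegral.integral_hasDerivAt_right (hint 0 x)
      (hf.stronglyMeasurable.stronglyMeasurableAtFilter) hf.continuousAt
  have h1 : HasDerivAt (fun φ : ℝ => ∫ t in (0:ℝ)..(φ + 1/2), f t) (f (φ + 1/2)) φ := by
    have := (hG (φ + 1/2)).comp φ ((hasDerivAt_id φ).add_const (1/2 : ℝ))
    simpa [Function.comp_def] using this
  have h2 : HasDerivAt (fun φ : ℝ => ∫ t in (0:ℝ)..(φ - 1/2), f t) (f (φ - 1/2)) φ := by
    have := (hG (φ - 1/2)).comp φ ((hasDerivAt_id φ).sub_const (1/2 : ℝ))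
    simpa [Function.comp_def] using this
  have := h1.sub h2
  refine this.congr_of_eventuallyEq ?_
  filter_upwards with x
  exact avg_eq_sub hint x

lemma avg_contDiff_one {f : ℝ → ℝ} (hf : Continuous f) : ContDiff ℝ 1 (avg f) ∧
    deriv (avg f) = fun φ => f (φ + 1/2) - f (φ - 1/2) := by
  have hd : ∀ φ, HasDerivAt (avg f) (f (φ + 1/2) - f (φ - 1/2)) φ := avg_hasDerivAt hf
  have hderiv : deriv (avg f) = fun φ => f (φ + 1/2) - f (φ - 1/2) :=
    funext fun φ => (hd φ).deriv
  refine ⟨contDiff_one_iff_deriv.2 ⟨fun φ => (hd φ).differentiableAt, ?_⟩, hderiv⟩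
  rw [hderiv]
  exact (hf.comp (continuous_id.add continuous_const)).sub
    (hf.comp (continuous_id.sub continuous_const))

theorem front_regularity
    (Φ : ℝ → ℝ) (hΦ : ContDiff ℝ 2 Φ)
    (W : ℝ → ℝ) (hWmeas : Measurable W) (hWbdd : ∃ C, ∀ᵐ φ ∂(volume : Measure ℝ), |W φ| ≤ C)
    (hWeq : ∀ᵐ φ ∂(volume : Measure ℝ), W φ = avg (fun s => deriv Φ (avg W s)) φ) :
    ∃ g : ℝ → ℝ, ContDiff ℝ 2 g ∧ W =ᵐ[(volume : Measure ℝ)] g := by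
  obtain ⟨C, hC⟩ := hWbdd
  -- W is interval integrable
  have hWint : ∀ a b : ℝ, IntervalIntegrable W volume a b := by
    intro a b
    rw [intervalIntegrable_iff]
    refine Integrable.mono' (integrableOn_const ?_)
      hWmeas.aestronglyMeasurable.restrict (ae_restrict_of_ae hC)
    exact measure_Ioc_lt_top.ne
  have havgWcont : Continuous (avg W) := continuous_avg hWint
  -- Φ' is C¹ hence continuous
  have hΦ' : ContDiff ℝ 1 (deriv Φ) := by
    have := (contDiff_succ_iff_deriv.mp (show ContDiff ℝ ((1:ℕ) + 1) Φ by exact_mod_cast hΦ)).2.2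
    exact this
  -- F := Φ' ∘ avg W is continuous
  set F : ℝ → ℝ := fun s => deriv Φ (avg W s) with hF
  have hFcont : Continuous F := hΦ'.continuous.comp havgWcont
  -- g := avg F; step 1: g is C¹
  set g : ℝ → ℝ := avg F with hg
  obtain ⟨hg1, _⟩ := avg_contDiff_one hFcont
  -- W = g a.e.
  have hWg : W =ᵐ[(volume : Measure ℝ)] g := hWeq
  -- avg W = avg g everywhere
  have havgeq : avg W = avg g := by
    funext φ
    refine intervalIntegral.integral_congr_ae ?_
    filter_upwards [hWg] with x hx _ using hx
  -- avg g is C¹ since g is continuous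
  obtain ⟨havgg1, _⟩ := avg_contDiff_one hg1.continuous
  have havgW1 : ContDiff ℝ 1 (avg W) := havgeq ▸ havgg1
  -- F is C¹
  have hF1 : ContDiff ℝ 1 F := hΦ'.comp havgW1
  -- g = avg F is C²
  have hd : ∀ φ, HasDerivAt g (F (φ + 1/2) - F (φ - 1/2)) φ := avg_hasDerivAt hFcont
  have hderiv : deriv g = fun φ => F (φ + 1/2) - F (φ - 1/2) :=
    funext fun φ => (hd φ).deriv
  refine ⟨g, ?_, hWg⟩
  have : ContDiff ℝ (1 + 1) g := by
    rw [contDiff_succ_iff_deriv]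
    refine ⟨fun φ => (hd φ).differentiableAt, by simp, ?_⟩
    rw [hderiv]
    exact (hF1.comp (contDiff_id.add contDiff_const)).sub
      (hF1.comp (contDiff_id.sub contDiff_const))
  norm_num at this
  exact this
end

section
/- Assume the Main Assumption. Then for every W ∈ 𝒞 the function φ ↦ g_Φ(W(φ)) is integrable over ℝ and |ℒ_#(W) − ℒ(W)| ≤ 4, where ℒ_#(W) = ∫_ℝ g_Φ(W(φ)) dφ. -/
open MeasureTheory Filter Topology

/-- The shock profile connecting `-1` to `1`. -/
noncomputable def Wsh : ℝ → ℝ := fun φ => if 0 ≤ φ then 1 else -1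

/-- The set `𝒞` of monotone heteroclinic profiles. -/
def inC (W : ℝ → ℝ) : Prop :=
  Monotone W ∧ MemLp (fun φ => Wsh φ - W φ) 2 (volume : Measure ℝ) ∧
  Tendsto W atBot (𝓝 (-1 : ℝ)) ∧ Tendsto W atTop (𝓝 (1 : ℝ))

/-- The action functional `ℒ`. -/
noncomputable def action (Φ W : ℝ → ℝ) : ℝ :=
  ∫ φ, ((W φ ^ 2 / 2 - Φ (avg W φ)) - (Wsh φ ^ 2 / 2 - Φ (avg Wsh φ)))

/-- The signed area function `g_Φ`. -/
noncomputable def gPhi (Φ : ℝ → ℝ) (w : ℝ) : ℝ := Φ (-1) - Φ w + w ^ 2 / 2 - 1 / 2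

/- ## Auxiliary lemmas -/

/-- A measurable function bounded by `1` is interval integrable. -/
lemma aux_II {f : ℝ → ℝ} (hm : Measurable f) (hb : ∀ x, |f x| ≤ 1) (a b : ℝ) :
    IntervalIntegrable f volume a b := by
  rw [intervalIntegrable_iff]
  refine Integrable.mono' (g := fun _ => (1:ℝ)) ?_ (hm.aestronglyMeasurable.restrict) ?_
  · exact integrableOn_const measure_Ioc_lt_top.ne
  · exact Eventually.of_forall fun x => by simpa using hb x

/-- The average of a bounded measurable function is continuous. -/
lemma aux_avg_cont {f : ℝ → ℝ} (hm : Measurable f) (hb : ∀ x, |f x| ≤ 1) :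
    Continuous (avg f) := by
  have hI : ∀ a b : ℝ, IntervalIntegrable f volume a b := aux_II hm hb
  have hF : Continuous (fun x : ℝ => ∫ s in (0:ℝ)..x, f s) :=
    intervalIntegral.continuous_primitive hI 0
  have : ∀ φ : ℝ, avg f φ = (∫ s in (0:ℝ)..(φ+1/2), f s) - ∫ s in (0:ℝ)..(φ-1/2), f s := by
    intro φ
    have := intervalIntegral.integral_add_adjacent_intervals (a := 0) (b := φ - 1/2)
      (c := φ + 1/2) (hI 0 _) (hI _ _)
    unfold avg; linarith
  rw [show avg f = _ from funext this]
  exact (hF.comp (continuous_id.add continuous_const)).sub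
    (hF.comp (continuous_id.sub continuous_const))

/-- `Φ` is 1-Lipschitz on `[-1,1]`. -/
lemma aux_lip {Φ : ℝ → ℝ} (hΦ : ContDiff ℝ 2 Φ)
    (hN1 : deriv Φ (-1) = -1) (hN2 : deriv Φ 1 = 1)
    (hC : ∀ w ∈ Set.Icc (-1 : ℝ) 1, 0 ≤ deriv (deriv Φ) w) :
    ∀ a ∈ Set.Icc (-1:ℝ) 1, ∀ b ∈ Set.Icc (-1:ℝ) 1, |Φ a - Φ b| ≤ |a - b| := by
  have h2 : (2 : WithTop ℕ∞) = 1 + 1 := by norm_num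
  rw [h2, contDiff_succ_iff_deriv] at hΦ
  obtain ⟨hdiff, -, hΦ'⟩ := hΦ
  have hd' : Differentiable ℝ (deriv Φ) := hΦ'.differentiable one_ne_zero
  have hmono : MonotoneOn (deriv Φ) (Set.Icc (-1:ℝ) 1) := by
    apply monotoneOn_of_deriv_nonneg (convex_Icc _ _) (hd'.continuous.continuousOn)
      (hd'.differentiableOn)
    intro x hx
    exact hC x (interior_subset hx)
  have hb : ∀ w ∈ Set.Icc (-1:ℝ) 1, |deriv Φ w| ≤ 1 := by
    intro w hw
    rw [abs_le]
    constructor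
    · rw [← hN1]; exact hmono (by norm_num) hw hw.1
    · rw [← hN2]; exact hmono hw (by norm_num) hw.2
  intro a ha b hb'
  rcases le_total a b with h | h
  · rcases eq_or_lt_of_le h with rfl | hlt
    · simp
    · obtain ⟨c, hc, hceq⟩ := exists_deriv_eq_slope Φ hlt (hdiff.continuous.continuousOn)
        (hdiff.differentiableOn)
      have hcI : c ∈ Set.Icc (-1:ℝ) 1 :=
        ⟨le_trans ha.1 (le_of_lt hc.1), le_trans (le_of_lt hc.2) hb'.2⟩
      have := hb c hcI
      have hba : Φ b - Φ a = deriv Φ c * (b - a) := by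
        rw [hceq, div_mul_cancel₀ _ (sub_ne_zero.mpr (ne_of_gt hlt))]
      rw [abs_sub_comm, hba, abs_mul, abs_sub_comm a b]
      nlinarith [abs_nonneg (b - a)]
  · rcases eq_or_lt_of_le h with rfl | hlt
    · simp
    · obtain ⟨c, hc, hceq⟩ := exists_deriv_eq_slope Φ hlt (hdiff.continuous.continuousOn)
        (hdiff.differentiableOn)
      have hcI : c ∈ Set.Icc (-1:ℝ) 1 :=
        ⟨le_trans hb'.1 (le_of_lt hc.1), le_trans (le_of_lt hc.2) ha.2⟩
      have := hb c hcI
      have hba : Φ a - Φ b = deriv Φ c * (a - b) := by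
        rw [hceq, div_mul_cancel₀ _ (sub_ne_zero.mpr (ne_of_gt hlt))]
      rw [hba, abs_mul]
      nlinarith [abs_nonneg (a - b)]

lemma Wsh_mono : Monotone Wsh := by
  intro a b hab
  unfold Wsh
  by_cases ha : 0 ≤ a
  · rw [if_pos ha, if_pos (le_trans ha hab)]
  · by_cases hb : 0 ≤ b <;> simp [ha, hb]

lemma Wsh_abs_le (x : ℝ) : |Wsh x| ≤ 1 := by
  unfold Wsh; split <;> simp

lemma Wsh_sq (x : ℝ) : Wsh x ^ 2 = 1 := by
  unfold Wsh; split <;> norm_num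

lemma avg_Wsh_right {φ : ℝ} (h : 1/2 ≤ φ) : avg Wsh φ = 1 := by
  unfold avg
  rw [intervalIntegral.integral_congr (g := fun _ => (1:ℝ))]
  · rw [intervalIntegral.integral_const, show φ + 1/2 - (φ - 1/2) = 1 by ring]; simp
  · intro s hs
    rw [Set.uIcc_of_le (by linarith)] at hs
    have : (0:ℝ) ≤ s := le_trans (by linarith) hs.1
    simp [Wsh, this]

lemma avg_Wsh_left {φ : ℝ} (h : φ ≤ -(1/2)) : avg Wsh φ = -1 := by
  unfold avg
  rw [intervalIntegral.integral_congr_ae (g := fun _ => (-1:ℝ))]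
  · rw [intervalIntegral.integral_const, show φ + 1/2 - (φ - 1/2) = 1 by ring]; simp
  · have h0 : ∀ᵐ (x : ℝ) ∂volume, x ≠ 0 := by
      refine ae_iff.mpr ?_
      simp only [ne_eq, not_not, Set.setOf_eq_eq_singleton]
      exact measure_singleton 0
    filter_upwards [h0] with x hx hxI
    rw [Set.uIoc_of_le (by linarith)] at hxI
    have : ¬ (0 ≤ x) := by
      rcases lt_or_gt_of_ne hx with h' | h'
      · linarith
      · exfalso; have := hxI.2; linarith
    simp [Wsh, this]

theorem action_comparison
    (Φ : ℝ → ℝ) (hΦ : ContDiff ℝ 2 Φ)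
    (hN1 : deriv Φ (-1) = -1) (hN2 : deriv Φ 1 = 1)
    (hC : ∀ w ∈ Set.Icc (-1 : ℝ) 1, 0 ≤ deriv (deriv Φ) w)
    (hE : Φ (-1) = Φ 1)
    (hS1 : deriv (deriv Φ) (-1) < 1) (hS2 : deriv (deriv Φ) 1 < 1)
    (hA : ∀ w ∈ Set.Ioo (-1 : ℝ) 1, 0 < gPhi Φ w)
    (W : ℝ → ℝ) (hW : inC W) :
    Integrable (fun φ => gPhi Φ (W φ)) (volume : Measure ℝ) ∧
    |(∫ φ, gPhi Φ (W φ)) - action Φ W| ≤ 4 := by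
  obtain ⟨hWm, hWL2, hWbot, hWtop⟩ := hW
  have lip := aux_lip hΦ hN1 hN2 hC
  have hΦc : Continuous Φ := hΦ.continuous
  -- bounds on W
  have hWlo : ∀ x, -1 ≤ W x := fun x => hWm.le_of_tendsto hWbot x
  have hWhi : ∀ x, W x ≤ 1 := fun x => hWm.ge_of_tendsto hWtop x
  have hWabs : ∀ x, |W x| ≤ 1 := fun x => abs_le.mpr ⟨hWlo x, hWhi x⟩
  have hWIcc : ∀ x, W x ∈ Set.Icc (-1:ℝ) 1 := fun x => ⟨hWlo x, hWhi x⟩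
  have hWmeas : Measurable W := hWm.measurable
  have hWshmeas : Measurable Wsh := Wsh_mono.measurable
  -- avg bounds
  have havgW_Icc : ∀ φ, avg W φ ∈ Set.Icc (-1:ℝ) 1 := by
    intro φ
    have := intervalIntegral.norm_integral_le_of_norm_le_const (C := 1)
      (f := W) (a := φ - 1/2) (b := φ + 1/2) (fun x _ => by simpa using hWabs x)
    rw [Real.norm_eq_abs] at this
    have h1 : |avg W φ| ≤ 1 := by
      unfold avg
      refine le_trans this ?_
      rw [show φ + 1/2 - (φ - 1/2) = 1 by ring]
      norm_num
    exact ⟨neg_le_of_abs_le h1, le_of_abs_le h1⟩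
  have havgWsh_Icc : ∀ φ, avg Wsh φ ∈ Set.Icc (-1:ℝ) 1 := by
    intro φ
    have := intervalIntegral.norm_integral_le_of_norm_le_const (C := 1)
      (f := Wsh) (a := φ - 1/2) (b := φ + 1/2) (fun x _ => by simpa using Wsh_abs_le x)
    rw [Real.norm_eq_abs] at this
    have h1 : |avg Wsh φ| ≤ 1 := by
      unfold avg
      refine le_trans this ?_
      rw [show φ + 1/2 - (φ - 1/2) = 1 by ring]
      norm_num
    exact ⟨neg_le_of_abs_le h1, le_of_abs_le h1⟩
  -- gPhi nonneg on Icc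
  have hgnn : ∀ w ∈ Set.Icc (-1:ℝ) 1, 0 ≤ gPhi Φ w := by
    intro w hw
    rcases eq_or_lt_of_le hw.1 with h | h
    · rw [← h]; unfold gPhi; norm_num
    rcases eq_or_lt_of_le hw.2 with h' | h'
    · rw [h']; unfold gPhi; rw [hE]; norm_num
    exact le_of_lt (hA w ⟨h, h'⟩)
  -- Lipschitz-based upper bounds on Φ(-1) - Φ w
  have hub1 : ∀ w ∈ Set.Icc (-1:ℝ) 1, Φ (-1) - Φ w ≤ w + 1 := by
    intro w hw
    have := lip (-1) (by norm_num) w hw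
    have h2 := le_of_abs_le this
    have : |(-1 : ℝ) - w| = w + 1 := by
      rw [abs_of_nonpos (by linarith [hw.1])]; ring
    linarith [h2, this.symm ▸ h2]
  have hub2 : ∀ w ∈ Set.Icc (-1:ℝ) 1, Φ (-1) - Φ w ≤ 1 - w := by
    intro w hw
    have := lip 1 (by norm_num) w hw
    have h2 := le_of_abs_le this
    have habs : |(1 : ℝ) - w| = 1 - w := abs_of_nonneg (by linarith [hw.2])
    rw [habs] at h2
    linarith [hE ▸ h2]
  -- (1) Integrability of gPhi ∘ W
  have hsq : Integrable (fun φ => (Wsh φ - W φ)^2) volume := hWL2.integrable_sq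
  have hgW_asm : AEStronglyMeasurable (fun φ => gPhi Φ (W φ)) volume := by
    have : Continuous (gPhi Φ) := by
      unfold gPhi
      fun_prop
    exact (this.measurable.comp hWmeas).aestronglyMeasurable
  have hgW_bound : ∀ φ, ‖gPhi Φ (W φ)‖ ≤ (1/2) * (Wsh φ - W φ)^2 := by
    intro φ
    rw [Real.norm_eq_abs, abs_of_nonneg (hgnn _ (hWIcc φ))]
    have h1 := hub1 (W φ) (hWIcc φ)
    have h2 := hub2 (W φ) (hWIcc φ)
    unfold gPhi
    unfold Wsh
    split
    · nlinarith
    · nlinarith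
  have I1 : Integrable (fun φ => gPhi Φ (W φ)) volume := by
    refine Integrable.mono' (hsq.const_mul (1/2)) hgW_asm ?_
    exact Eventually.of_forall hgW_bound
  refine ⟨I1, ?_⟩
  -- (2) h1 := Φ ∘ W - Φ ∘ avg W
  set h1 : ℝ → ℝ := fun φ => Φ (W φ) - Φ (avg W φ) with hh1def
  set D : ℝ → ℝ := fun φ => W (φ + 1/2) - W (φ - 1/2) with hDdef
  have hDnn : ∀ φ, 0 ≤ D φ := fun φ => sub_nonneg.mpr (hWm (by linarith))
  have hDmeas : Measurable D := by
    have m1 : Monotone (fun φ => W (φ + 1/2)) := fun a b hab => hWm (by linarith)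
    have m2 : Monotone (fun φ => W (φ - 1/2)) := fun a b hab => hWm (by linarith)
    exact m1.measurable.sub m2.measurable
  have hWII : ∀ a b : ℝ, IntervalIntegrable W volume a b := aux_II hWmeas hWabs
  have hWshII : ∀ a b : ℝ, IntervalIntegrable Wsh volume a b := aux_II hWshmeas Wsh_abs_le
  -- pointwise bound |h1| ≤ D
  have hh1bound : ∀ φ, |h1 φ| ≤ D φ := by
    intro φ
    have lipb := lip (W φ) (hWIcc φ) (avg W φ) (havgW_Icc φ)
    refine le_trans lipb ?_
    -- |W φ - avg W φ| ≤ D φ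
    have heq : W φ - avg W φ = ∫ s in (φ - 1/2)..(φ + 1/2), (W φ - W s) := by
      rw [intervalIntegral.integral_sub (intervalIntegrable_const) (hWII _ _)]
      unfold avg
      rw [intervalIntegral.integral_const]
      rw [show φ + 1/2 - (φ - 1/2) = 1 by ring]
      simp
    have hb : ∀ s ∈ Set.uIoc (φ - 1/2) (φ + 1/2), ‖W φ - W s‖ ≤ D φ := by
      intro s hs
      rw [Set.uIoc_of_le (by linarith)] at hs
      rw [Real.norm_eq_abs, abs_le]
      constructor
      · have h2 : W s ≤ W (φ + 1/2) := hWm hs.2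
        have h3 : W (φ - 1/2) ≤ W φ := hWm (by linarith)
        unfold D
        linarith
      · have h2 : W (φ - 1/2) ≤ W s := hWm (le_of_lt hs.1)
        have h3 : W φ ≤ W (φ + 1/2) := hWm (by linarith)
        unfold D
        linarith
    have := intervalIntegral.norm_integral_le_of_norm_le_const (C := D φ) hb
    rw [show φ + 1/2 - (φ - 1/2) = 1 by ring] at this
    simp only [abs_one, mul_one] at this
    rw [heq]
    simpa using this
  -- lintegral of D is at most 2
  have hDII : ∀ a b : ℝ, IntervalIntegrable D volume a b := by
    intro a b
    rw [intervalIntegrable_iff]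
    refine Integrable.mono' (g := fun _ => (2:ℝ)) ?_ (hDmeas.aestronglyMeasurable.restrict) ?_
    · exact integrableOn_const measure_Ioc_lt_top.ne
    · refine Eventually.of_forall fun x => ?_
      rw [Real.norm_eq_abs, abs_of_nonneg (hDnn x)]
      unfold D
      linarith [hWlo (x - 1/2), hWhi (x + 1/2)]
  have hDint_bound : ∀ n : ℕ, (∫ φ in Set.Ioc (-(n:ℝ)) n, D φ) ≤ 2 := by
    intro n
    have hn : (-(n:ℝ)) ≤ n := le_trans (neg_nonpos.mpr n.cast_nonneg) n.cast_nonneg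
    rw [← intervalIntegral.integral_of_le hn]
    have hsplit : (∫ φ in (-(n:ℝ))..n, D φ)
        = (∫ φ in (-(n:ℝ))..n, W (φ + 1/2)) - ∫ φ in (-(n:ℝ))..n, W (φ - 1/2) := by
      unfold D
      apply intervalIntegral.integral_sub
      · have : Monotone (fun φ => W (φ + 1/2)) := fun a b hab => hWm (by linarith)
        exact aux_II this.measurable (fun x => hWabs _) _ _
      · have : Monotone (fun φ => W (φ - 1/2)) := fun a b hab => hWm (by linarith)
        exact aux_II this.measurable (fun x => hWabs _) _ _
    have hc1 : (∫ φ in (-(n:ℝ))..n, W (φ + 1/2)) = ∫ x in (-(n:ℝ) + 1/2)..(n + 1/2), W x :=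
      intervalIntegral.integral_comp_add_right W (1/2)
    have hc2 : (∫ φ in (-(n:ℝ))..n, W (φ - 1/2)) = ∫ x in (-(n:ℝ) - 1/2)..(n - 1/2), W x := by
      have := intervalIntegral.integral_comp_add_right (a := -(n:ℝ)) (b := n) W (-(1/2))
      simpa [sub_eq_add_neg] using this
    have hadj1 : (∫ x in (-(n:ℝ) - 1/2)..(-(n:ℝ) + 1/2), W x) + (∫ x in (-(n:ℝ) + 1/2)..(n + 1/2), W x)
        = ∫ x in (-(n:ℝ) - 1/2)..(n + 1/2), W x :=
      intervalIntegral.integral_add_adjacent_intervals (hWII _ _) (hWII _ _)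
    have hadj2 : (∫ x in (-(n:ℝ) - 1/2)..(n - 1/2), W x) + (∫ x in (n - 1/2)..(n + 1/2), W x)
        = ∫ x in (-(n:ℝ) - 1/2)..(n + 1/2), W x :=
      intervalIntegral.integral_add_adjacent_intervals (hWII _ _) (hWII _ _)
    have hb1 : |∫ x in (n - 1/2)..(n + 1/2), W x| ≤ 1 := by
      have := intervalIntegral.norm_integral_le_of_norm_le_const (C := 1)
        (f := W) (a := n - 1/2) (b := n + 1/2) (fun x _ => by simpa using hWabs x)
      rw [Real.norm_eq_abs] at this
      refine le_trans this ?_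
      rw [show (n:ℝ) + 1/2 - ((n:ℝ) - 1/2) = 1 by ring]
      norm_num
    have hb2 : |∫ x in (-(n:ℝ) - 1/2)..(-(n:ℝ) + 1/2), W x| ≤ 1 := by
      have := intervalIntegral.norm_integral_le_of_norm_le_const (C := 1)
        (f := W) (a := -(n:ℝ) - 1/2) (b := -(n:ℝ) + 1/2) (fun x _ => by simpa using hWabs x)
      rw [Real.norm_eq_abs] at this
      refine le_trans this ?_
      rw [show -(n:ℝ) + 1/2 - (-(n:ℝ) - 1/2) = 1 by ring]
      norm_num
    rw [hsplit, hc1, hc2]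
    have e1 := abs_le.mp hb1
    have e2 := abs_le.mp hb2
    linarith
  have hDlint : (∫⁻ φ, ENNReal.ofReal (D φ)) ≤ 2 := by
    set f : ℕ → ℝ → ENNReal := fun n φ =>
      (Set.Ioc (-(n:ℝ)) n).indicator (fun φ => ENNReal.ofReal (D φ)) φ with hfdef
    have hfmeas : ∀ n, Measurable (f n) := fun n =>
      (ENNReal.measurable_ofReal.comp hDmeas).indicator measurableSet_Ioc
    have hfmono : Monotone f := by
      intro m n hmn φ
      apply Set.indicator_le_indicator_of_subset
      · apply Set.Ioc_subset_Ioc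
        · simp only [neg_le_neg_iff]; exact_mod_cast hmn
        · exact_mod_cast hmn
      · exact fun a => by simp
    have hfsup : ∀ φ, (⨆ n, f n φ) = ENNReal.ofReal (D φ) := by
      intro φ
      apply le_antisymm
      · exact iSup_le fun n => Set.indicator_le_self _ _ _
      · obtain ⟨n, hn⟩ := exists_nat_gt |φ|
        have hmem : φ ∈ Set.Ioc (-(n:ℝ)) n := by
          constructor
          · linarith [(abs_lt.mp hn).1]
          · exact le_of_lt (lt_of_le_of_lt (le_abs_self φ) hn)
        refine le_iSup_of_le n ?_
        rw [hfdef]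
        simp only [Set.indicator_of_mem hmem]
        exact le_refl _
    calc (∫⁻ φ, ENNReal.ofReal (D φ)) = ∫⁻ φ, ⨆ n, f n φ := by
          simp_rw [hfsup]
      _ = ⨆ n, ∫⁻ φ, f n φ := lintegral_iSup hfmeas hfmono
      _ ≤ 2 := by
          refine iSup_le fun n => ?_
          have heq : (∫⁻ φ, f n φ) = ∫⁻ φ in Set.Ioc (-(n:ℝ)) n, ENNReal.ofReal (D φ) := by
            simp only [hfdef]
            exact lintegral_indicator measurableSet_Ioc _
          rw [heq]
          have hint : IntegrableOn D (Set.Ioc (-(n:ℝ)) n) volume := by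
            have := (hDII (-(n:ℝ)) n)
            rw [intervalIntegrable_iff, Set.uIoc_of_le (le_trans (neg_nonpos.mpr n.cast_nonneg) n.cast_nonneg)] at this
            exact this
          rw [← ofReal_integral_eq_lintegral_ofReal hint
            (Eventually.of_forall fun x => hDnn x)]
          calc ENNReal.ofReal (∫ φ in Set.Ioc (-(n:ℝ)) n, D φ)
              ≤ ENNReal.ofReal 2 := ENNReal.ofReal_le_ofReal (hDint_bound n)
            _ ≤ 2 := by norm_num
  -- integrability of h1 and bound on its integral
  have havgWcont : Continuous (avg W) := aux_avg_cont hWmeas hWabs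
  have hh1asm : AEStronglyMeasurable h1 volume := by
    refine AEStronglyMeasurable.sub ?_ ?_
    · exact (hΦc.measurable.comp hWmeas).aestronglyMeasurable
    · exact (hΦc.comp havgWcont).aestronglyMeasurable
  have hh1lint : (∫⁻ φ, ENNReal.ofReal ‖h1 φ‖) ≤ 2 := by
    refine le_trans (lintegral_mono fun φ => ?_) hDlint
    exact ENNReal.ofReal_le_ofReal (by rw [Real.norm_eq_abs]; exact hh1bound φ)
  have I2 : Integrable h1 volume := by
    refine ⟨hh1asm, ?_⟩
    rw [hasFiniteIntegral_iff_norm]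
    exact lt_of_le_of_lt hh1lint (by norm_num)
  have hInth1 : |∫ φ, h1 φ| ≤ 2 := by
    have hn := norm_integral_le_lintegral_norm (μ := volume) h1
    rw [Real.norm_eq_abs] at hn
    refine le_trans hn ?_
    exact ENNReal.toReal_le_of_le_ofReal (by norm_num)
      (le_trans hh1lint (by norm_num))
  -- (3) h2 := Φ ∘ avg Wsh - Φ (-1)
  set h2 : ℝ → ℝ := fun φ => Φ (avg Wsh φ) - Φ (-1) with hh2def
  have hh2cont : Continuous h2 := by
    exact (hΦc.comp (aux_avg_cont hWshmeas Wsh_abs_le)).sub continuous_const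
  have hh2zero : ∀ φ, φ ∉ Set.Icc (-(1/2):ℝ) (1/2) → h2 φ = 0 := by
    intro φ hφ
    simp only [Set.mem_Icc, not_and_or, not_le] at hφ
    show Φ (avg Wsh φ) - Φ (-1) = 0
    rcases hφ with h | h
    · rw [avg_Wsh_left (le_of_lt h)]; ring
    · rw [avg_Wsh_right (le_of_lt h), ← hE]; ring
  have hh2bd : ∀ φ, |h2 φ| ≤ 1 := by
    intro φ
    show |Φ (avg Wsh φ) - Φ (-1)| ≤ 1
    set w := avg Wsh φ with hw
    have hwI : w ∈ Set.Icc (-1:ℝ) 1 := havgWsh_Icc φ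
    have hg := hgnn w hwI
    unfold gPhi at hg
    have h1' := hub1 w hwI
    have h2' := hub2 w hwI
    rw [abs_le]
    constructor
    · rcases le_total w 0 with h | h
      · nlinarith
      · nlinarith
    · nlinarith [sq_nonneg w, hwI.1, hwI.2]
  have hgind : Integrable ((Set.Icc (-(1/2):ℝ) (1/2)).indicator (fun _ => (1:ℝ))) volume := by
    rw [integrable_indicator_iff measurableSet_Icc]
    exact integrableOn_const measure_Icc_lt_top.ne
  have hh2le : ∀ φ, ‖h2 φ‖ ≤ (Set.Icc (-(1/2):ℝ) (1/2)).indicator (fun _ => (1:ℝ)) φ := by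
    intro φ
    by_cases hφ : φ ∈ Set.Icc (-(1/2):ℝ) (1/2)
    · rw [Set.indicator_of_mem hφ, Real.norm_eq_abs]
      exact hh2bd φ
    · rw [Set.indicator_of_notMem hφ, hh2zero φ hφ]
      simp
  have I3 : Integrable h2 volume := by
    refine Integrable.mono' hgind hh2cont.aestronglyMeasurable ?_
    exact Eventually.of_forall hh2le
  have hInth2 : |∫ φ, h2 φ| ≤ 1 := by
    have := norm_integral_le_of_norm_le hgind (Eventually.of_forall hh2le)
    rw [Real.norm_eq_abs] at this
    refine le_trans this ?_
    rw [integral_indicator_const _ measurableSet_Icc]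
    simp only [smul_eq_mul, mul_one]
    rw [Real.volume_real_Icc]
    rw [show (1:ℝ)/2 - (-(1/2)) = 1 by ring]
    simp
  -- (4) pointwise decomposition of the action integrand
  have hdecomp : ∀ φ, ((W φ ^ 2 / 2 - Φ (avg W φ)) - (Wsh φ ^ 2 / 2 - Φ (avg Wsh φ)))
      = gPhi Φ (W φ) + h1 φ + h2 φ := by
    intro φ
    unfold gPhi
    unfold h1 h2
    rw [Wsh_sq φ]
    ring
  have haction : action Φ W = (∫ φ, gPhi Φ (W φ)) + (∫ φ, h1 φ) + (∫ φ, h2 φ) := by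
    unfold action
    rw [show (fun φ => ((W φ ^ 2 / 2 - Φ (avg W φ)) - (Wsh φ ^ 2 / 2 - Φ (avg Wsh φ))))
      = fun φ => gPhi Φ (W φ) + h1 φ + h2 φ from funext hdecomp]
    have I12 : Integrable (fun φ => gPhi Φ (W φ) + h1 φ) volume := I1.add I2
    rw [integral_add I12 I3, integral_add I1 I2]
  rw [haction]
  have habs : |(∫ φ, h1 φ) + (∫ φ, h2 φ)| ≤ 3 := by
    calc |(∫ φ, h1 φ) + (∫ φ, h2 φ)| ≤ |∫ φ, h1 φ| + |∫ φ, h2 φ| := abs_add_le _ _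
      _ ≤ 3 := by linarith
  rw [show (∫ φ, gPhi Φ (W φ)) - ((∫ φ, gPhi Φ (W φ)) + (∫ φ, h1 φ) + (∫ φ, h2 φ))
    = -((∫ φ, h1 φ) + (∫ φ, h2 φ)) by ring]
  rw [abs_neg]
  linarith
end
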